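/- arXiv:1508.05609 — 3 statements merged into one kernel-verified Lean document; each statement's English description precedes it below -/
import Mathlib

section
/- For fixed N and 0 ≤ k ≤ N, the family of functions (1−c)^{N−k}·P_k^{(2(N−k)+3,0)}(2c−1), for k = 0,…,N (viewed as polynomials in c), and the family B_k^N(c), for k = 0,…,N, span the same (N+1)-dimensional space of polynomials of degree at most N. -/
/-!
Every family involved is triangular with respect to the unnormalised Bernstein functions
`c ^ k * (1 - c) ^ (N - k)`: `B_k^N` is `C(N,k)` times the `k`-th one, and writing
`((2c - 1) - 1) / 2 = -(1 - c)` in the explicit formula for `P_k` shows that the `k`-th weighted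
Jacobi function is `C(k + α, k)` times the `k`-th one plus a combination of those with smaller
index. Expanding `(1 - c) ^ (N - k)` makes these triangular, in reverse order, with respect to the
monomials, which are linearly independent because `ℝ` is infinite. Triangular changes of family
with nonzero diagonal preserve spans, and the dimension is the number of monomials.
-/

/-- The 1D Bernstein polynomial `B_k^N(x) = C(N,k) x^k (1-x)^(N-k)`. -/
noncomputable def bern (N k : ℕ) (x : ℝ) : ℝ :=
  (N.choose k : ℝ) * x ^ k * (1 - x) ^ (N - k)

/-- The Jacobi polynomial `P_n^{(α,0)}` with natural parameter `α`, via the explicit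
formula `P_n^{(α,β)}(x) = ∑_s C(n+α, n-s) C(n+β, s) ((x-1)/2)^s ((x+1)/2)^{n-s}`. -/
noncomputable def jacobiP (n α : ℕ) (x : ℝ) : ℝ :=
  ∑ s ∈ Finset.range (n + 1),
    ((n + α).choose (n - s) : ℝ) * (n.choose s : ℝ) * ((x - 1) / 2) ^ s * ((x + 1) / 2) ^ (n - s)

open Submodule

section Triangular

variable {ι K M : Type*} [Field K] [AddCommGroup M] [Module K M]

theorem span_range_eq_of_triangular (v b : ι → M) (μ : ι → ℕ)
    (h : ∀ k, ∃ u : K, u ≠ 0 ∧ v k - u • b k ∈ span K (b '' {j | μ j < μ k})) :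
    span K (Set.range v) = span K (Set.range b) := by
  refine le_antisymm (span_le.2 ?_) (span_le.2 ?_)
  · rintro _ ⟨k, rfl⟩
    obtain ⟨u, -, hk⟩ := h k
    simpa using add_mem (span_mono (Set.image_subset_range _ _) hk)
      (smul_mem _ u (subset_span (Set.mem_range_self k)))
  · suffices ∀ n k, μ k = n → b k ∈ span K (Set.range v) by
      rintro _ ⟨k, rfl⟩
      exact this _ k rfl
    intro n
    induction n using Nat.strong_induction_on with
    | _ n ih =>
      rintro k rfl
      obtain ⟨u, hu, hk⟩ := h k
      have hlower : span K (b '' {j | μ j < μ k}) ≤ span K (Set.range v) :=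
        span_le.2 (by rintro _ ⟨j, hj, rfl⟩; exact ih _ hj j rfl)
      have : u • b k ∈ span K (Set.range v) := by
        simpa using sub_mem (subset_span (Set.mem_range_self k)) (hlower hk)
      simpa [hu] using smul_mem _ u⁻¹ this

end Triangular

theorem linearIndependent_pow_fun {K : Type*} [Field K] [Infinite K] :
    LinearIndependent K (fun m : ℕ => fun c : K => c ^ m) := by
  let evalFun : Polynomial K →ₗ[K] (K → K) := LinearMap.pi Polynomial.leval
  have hinj : Function.Injective evalFun := fun p q hpq => Polynomial.funext (congrFun hpq)
  have hmonomials : (fun m : ℕ => fun c : K => c ^ m) = evalFun ∘ Polynomial.basisMonomials K := by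
    funext m c
    simp [evalFun, Polynomial.coe_basisMonomials]
  rw [hmonomials]
  exact (Polynomial.basisMonomials K).linearIndependent.map' _ (LinearMap.ker_eq_bot.2 hinj)

noncomputable def bernMonomial (N k : ℕ) (c : ℝ) : ℝ :=
  c ^ k * (1 - c) ^ (N - k)

theorem bern_eq_choose_smul_bernMonomial (N k : ℕ) :
    (fun c => bern N k c) = (N.choose k : ℝ) • bernMonomial N k := by
  funext c
  simp [bern, bernMonomial, mul_assoc]

theorem bernMonomial_eq_sum (N k : ℕ) :
    bernMonomial N k = ∑ i ∈ Finset.range (N - k + 1),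
      ((-1 : ℝ) ^ i * ((N - k).choose i : ℝ)) • fun c : ℝ => c ^ (k + i) := by
  funext c
  simp only [bernMonomial, Finset.sum_apply, Pi.smul_apply, smul_eq_mul]
  rw [show (1 : ℝ) - c = -c + 1 by ring, add_pow, Finset.mul_sum]
  refine Finset.sum_congr rfl fun i _ => ?_
  rw [neg_pow]
  ring

theorem one_sub_pow_mul_jacobiP_eq_sum {N k : ℕ} (α : ℕ) (hk : k ≤ N) :
    (fun c : ℝ => (1 - c) ^ (N - k) * jacobiP k α (2 * c - 1)) =
      ∑ s ∈ Finset.range (k + 1),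
        ((-1 : ℝ) ^ s * ((k + α).choose (k - s) : ℝ) * (k.choose s : ℝ)) • bernMonomial N (k - s) := by
  funext c
  simp only [jacobiP, Finset.sum_apply, Pi.smul_apply, smul_eq_mul, bernMonomial, Finset.mul_sum]
  refine Finset.sum_congr rfl fun s hs => ?_
  have hsk : s ≤ k := Finset.mem_range_succ_iff.1 hs
  rw [show N - (k - s) = N - k + s by omega, show (2 * c - 1 - 1) / 2 = -(1 - c) by ring,
    show (2 * c - 1 + 1) / 2 = c by ring, neg_pow, pow_add]
  ring

theorem one_sub_pow_mul_jacobiP_sub_mem_span (N α : ℕ) (k : Fin (N + 1)) :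
    (fun c : ℝ => (1 - c) ^ (N - (k : ℕ)) * jacobiP k α (2 * c - 1)) -
        (((k : ℕ) + α).choose k : ℝ) • bernMonomial N k ∈
      span ℝ ((fun j : Fin (N + 1) => bernMonomial N j) '' {j | (j : ℕ) < k}) := by
  rw [one_sub_pow_mul_jacobiP_eq_sum α k.is_le, Finset.sum_range_succ']
  simp only [pow_zero, one_mul, Nat.sub_zero, Nat.choose_zero_right, Nat.cast_one, mul_one,
    add_sub_cancel_right]
  refine sum_mem fun s hs => smul_mem _ _ (subset_span ?_)
  have hs : s < k := Finset.mem_range.1 hs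
  have hk := k.is_lt
  exact ⟨⟨k - (s + 1), by omega⟩, show k - (s + 1) < (k : ℕ) by omega, rfl⟩

theorem bernMonomial_sub_mem_span (N : ℕ) (k : Fin (N + 1)) :
    bernMonomial N k - (1 : ℝ) • (fun c : ℝ => c ^ (k : ℕ)) ∈
      span ℝ ((fun j : Fin (N + 1) => fun c : ℝ => c ^ (j : ℕ)) '' {j | N - (j : ℕ) < N - k}) := by
  rw [bernMonomial_eq_sum, Finset.sum_range_succ']
  simp only [pow_zero, one_mul, add_zero, Nat.choose_zero_right, Nat.cast_one, add_sub_cancel_right]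
  refine sum_mem fun i hi => smul_mem _ _ (subset_span ?_)
  have hi : i < N - k := Finset.mem_range.1 hi
  have hk := k.is_le
  exact ⟨⟨k + (i + 1), by omega⟩, show N - (k + (i + 1)) < N - k by omega, rfl⟩

/-- The weighted Jacobi family `(1-c)^{N-k} P_k^{(2(N-k)+3,0)}(2c-1)`, `k = 0,…,N`,
and the Bernstein family `B_k^N(c)`, `k = 0,…,N`, span the same `(N+1)`-dimensional
space of polynomials of degree at most `N` (as functions of `c`). -/
theorem jacobi_bernstein_same_span (N : ℕ) :
    Submodule.span ℝ
        (Set.range fun k : Fin (N + 1) =>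
          fun c : ℝ => (1 - c) ^ (N - (k : ℕ)) * jacobiP k (2 * (N - (k : ℕ)) + 3) (2 * c - 1)) =
      Submodule.span ℝ (Set.range fun k : Fin (N + 1) => fun c : ℝ => bern N k c) ∧
    Submodule.span ℝ (Set.range fun k : Fin (N + 1) => fun c : ℝ => bern N k c) =
      Submodule.span ℝ (Set.range fun m : Fin (N + 1) => fun c : ℝ => c ^ (m : ℕ)) ∧
    Module.finrank ℝ
        (Submodule.span ℝ (Set.range fun k : Fin (N + 1) => fun c : ℝ => bern N k c)) =
      N + 1 := by
  have hJacobi := span_range_eq_of_triangular _ (fun k : Fin (N + 1) => bernMonomial N k)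
    (fun k => (k : ℕ)) fun k =>
      ⟨_, Nat.cast_ne_zero.2 (Nat.choose_pos (Nat.le_add_right _ _)).ne',
        one_sub_pow_mul_jacobiP_sub_mem_span N (2 * (N - (k : ℕ)) + 3) k⟩
  have hBern := span_range_eq_of_triangular (fun k : Fin (N + 1) => fun c : ℝ => bern N k c)
    (fun k => bernMonomial N k) (fun k => (k : ℕ)) fun k =>
      ⟨_, Nat.cast_ne_zero.2 (Nat.choose_pos k.is_le).ne',
        by rw [bern_eq_choose_smul_bernMonomial, sub_self]; exact zero_mem _⟩
  have hMonomials := span_range_eq_of_triangular _ _ (fun k : Fin (N + 1) => N - (k : ℕ))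
    fun k => ⟨1, one_ne_zero, bernMonomial_sub_mem_span N k⟩
  refine ⟨hJacobi.trans hBern.symm, hBern.trans hMonomials, ?_⟩
  rw [hBern, hMonomials, finrank_span_eq_card
    (b := fun m : Fin (N + 1) => fun c : ℝ => c ^ (m : ℕ))
    (linearIndependent_pow_fun.comp _ Fin.val_injective),
    Fintype.card_fin]
end

section
/- The pyramidal Bernstein-Bezier functions B_{ijk}(a,b,c) = B_i^{N−k}(a) B_j^{N−k}(b) B_k^N(c), over all valid indices 0 ≤ k ≤ N, 0 ≤ i,j ≤ N−k, are linearly independent as functions on the open unit cube. -/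
/-- The open unit cube in `ℝ³`. -/
def openUnitCube : Set (ℝ × ℝ × ℝ) :=
  {p | p.1 ∈ Set.Ioo (0:ℝ) 1 ∧ p.2.1 ∈ Set.Ioo (0:ℝ) 1 ∧ p.2.2 ∈ Set.Ioo (0:ℝ) 1}

open Polynomial

theorem LinearIndependent.polynomial_map {R A ι : Type*} [CommRing R] [CommRing A] [Algebra R A]
    [Module.Flat R A] {p : ι → R[X]} (hp : LinearIndependent R p) :
    LinearIndependent A fun i => (p i).map (algebraMap R A) := by
  have := (Module.Flat.linearIndependent_one_tmul (S := A) hp).map' _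
    (polyEquivTensor' R A).symm.toLinearEquiv.ker
  simpa [Function.comp_def] using this

theorem bernsteinPolynomial.linearIndependent_of_ratAlgebra (K : Type*) [CommRing K]
    [Algebra ℚ K] (n : ℕ) :
    LinearIndependent K fun ν : Fin (n + 1) => bernsteinPolynomial K n ν := by
  simpa [bernsteinPolynomial.map] using
    (bernsteinPolynomial.linearIndependent n).polynomial_map (A := K)

theorem LinearIndependent.polynomial_eval_of_infinite {K ι : Type*} [CommRing K] [IsDomain K]
    {p : ι → K[X]} (hp : LinearIndependent K p) {s : Set K} (hs : s.Infinite) :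
    LinearIndependent K fun i => fun x : s => (p i).eval (x : K) := by
  refine hp.map' (LinearMap.pi fun x : s => leval (x : K)) ?_
  rw [LinearMap.ker_eq_bot, injective_iff_map_eq_zero]
  intro q hq
  exact eq_zero_of_infinite_isRoot q (hs.mono fun x hx => congrFun hq ⟨x, hx⟩)

theorem LinearIndependent.sigma_mul {R X Y ι : Type*} [CommRing R] {κ : ι → Type*}
    [Fintype ι] [∀ i, Fintype (κ i)] {f : ι → Y → R} {g : (i : ι) → κ i → X → R}
    (hf : LinearIndependent R f) (hg : ∀ i, LinearIndependent R (g i)) :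
    LinearIndependent R fun p : Σ i, κ i => fun xy : X × Y => g p.1 p.2 xy.1 * f p.1 xy.2 := by
  rw [Fintype.linearIndependent_iff] at hf ⊢
  intro c hc ⟨i, j⟩
  have hslice : ∀ x i, ∑ j, c ⟨i, j⟩ * g i j x = 0 := by
    intro x
    refine hf (fun i => ∑ j, c ⟨i, j⟩ * g i j x) (funext fun y => ?_)
    have hxy := congrFun hc (x, y)
    simp only [Finset.sum_apply, Pi.smul_apply, smul_eq_mul, Pi.zero_apply,
      Fintype.sum_sigma] at hxy ⊢
    rw [← hxy]
    refine Finset.sum_congr rfl fun i _ => ?_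
    rw [Finset.sum_mul]
    exact Finset.sum_congr rfl fun j _ => by ring
  refine Fintype.linearIndependent_iff.mp (hg i) (fun j => c ⟨i, j⟩) (funext fun x => ?_) j
  simpa using hslice x i

theorem LinearIndependent.prod_mul {R X Y ι κ : Type*} [CommRing R] [Fintype ι] [Fintype κ]
    {f : κ → Y → R} {g : ι → X → R} (hf : LinearIndependent R f) (hg : LinearIndependent R g) :
    LinearIndependent R fun p : ι × κ => fun xy : X × Y => g p.1 xy.1 * f p.2 xy.2 :=
  (hf.sigma_mul (κ := fun _ => ι) fun _ => hg).comp _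
    ((Equiv.prodComm ι κ).trans (Equiv.sigmaEquivProd κ ι).symm).injective

theorem bern_eq_eval (M k : ℕ) (x : ℝ) : bern M k x = (bernsteinPolynomial ℝ M k).eval x := by
  simp [bernsteinPolynomial, bern]

theorem linearIndependent_bern (M : ℕ) :
    LinearIndependent ℝ fun k : Fin (M + 1) => fun x : Set.Ioo (0 : ℝ) 1 => bern M k x := by
  simp only [bern_eq_eval]
  exact (bernsteinPolynomial.linearIndependent_of_ratAlgebra ℝ M).polynomial_eval_of_infinite
    (Set.Ioo_infinite zero_lt_one)

/-- The pyramidal Bernstein-Bezier functions, over all valid indices, are linearly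
independent as functions on the open unit cube. -/
theorem pyramid_bernstein_linearIndependent (N : ℕ) :
    LinearIndependent ℝ
      (fun idx : Σ k : Fin (N + 1), Fin (N - (k : ℕ) + 1) × Fin (N - (k : ℕ) + 1) =>
        fun p : openUnitCube =>
          bern (N - (idx.1 : ℕ)) (idx.2.1 : ℕ) (p : ℝ × ℝ × ℝ).1 *
            bern (N - (idx.1 : ℕ)) (idx.2.2 : ℕ) (p : ℝ × ℝ × ℝ).2.1 *
            bern N (idx.1 : ℕ) (p : ℝ × ℝ × ℝ).2.2) := by
  let I := Set.Ioo (0 : ℝ) 1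
  let toCube : (I × I) × I → openUnitCube := fun q =>
    ⟨(q.1.1, q.1.2, q.2), q.1.1.2, q.1.2.2, q.2.2⟩
  have hprod := (linearIndependent_bern N).sigma_mul fun k =>
    (linearIndependent_bern (N - k)).prod_mul (linearIndependent_bern (N - k))
  exact hprod.of_comp (LinearMap.funLeft ℝ ℝ toCube)
end

section
/- For every polynomial p(r,s,t) of total degree at most N on the unit right pyramid, the pullback p(a(1−c), b(1−c), c) lies in the span of the pyramidal Bernstein-Bezier basis functions B_{ijk}(a,b,c) = B_i^{N−k}(a) B_j^{N−k}(b) B_k^N(c) with 0 ≤ k ≤ N, 0 ≤ i,j ≤ N−k. -/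
open Finset

lemma bern_expand (M m s : ℕ) (h : m + s ≤ M) (x : ℝ) :
    x ^ m * (1 - x) ^ s =
      ∑ j ∈ range (M - m - s + 1),
        (((M - m - s).choose j : ℝ) / (M.choose (m + j) : ℝ)) * bern M (m + j) x := by
  have hexp := add_pow x (1 - x) (M - m - s)
  have hone : x + (1 - x) = 1 := by ring
  rw [hone, one_pow] at hexp
  calc x ^ m * (1 - x) ^ s
      = x ^ m * (1 - x) ^ s *
        ∑ j ∈ range (M - m - s + 1),
          x ^ j * (1 - x) ^ (M - m - s - j) * ((M - m - s).choose j : ℝ) := by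
        rw [← hexp]; ring
    _ = _ := by
        rw [Finset.mul_sum]
        refine Finset.sum_congr rfl fun j hj => ?_
        have hj' : j ≤ M - m - s := Nat.lt_succ_iff.mp (mem_range.mp hj)
        have h1 : m + j ≤ M := by omega
        have hc : (M.choose (m + j) : ℝ) ≠ 0 :=
          Nat.cast_ne_zero.mpr (Nat.choose_pos h1).ne'
        unfold bern
        have h2 : M - (m + j) = s + (M - m - s - j) := by omega
        rw [h2, pow_add, pow_add]
        field_simp

lemma pow_eq_sum_bern (M m : ℕ) (h : m ≤ M) (x : ℝ) :
    x ^ m = ∑ j ∈ range (M - m + 1),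
        (((M - m).choose j : ℝ) / (M.choose (m + j) : ℝ)) * bern M (m + j) x := by
  have := bern_expand M m 0 (by omega) x
  simpa using this

lemma monomial_mem (N α β γ : ℕ) (h : α + β + γ ≤ N) :
    (fun q : ℝ × ℝ × ℝ =>
        (q.1 * (1 - q.2.2)) ^ α * ((q.2.1 * (1 - q.2.2)) ^ β * q.2.2 ^ γ)) ∈
      Submodule.span ℝ
        (Set.range fun idx : Σ k : Fin (N + 1), Fin (N - (k : ℕ) + 1) × Fin (N - (k : ℕ) + 1) =>
          fun q : ℝ × ℝ × ℝ =>
            bern (N - (idx.1 : ℕ)) (idx.2.1 : ℕ) q.1 *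
              bern (N - (idx.1 : ℕ)) (idx.2.2 : ℕ) q.2.1 *
              bern N (idx.1 : ℕ) q.2.2) := by
  have key : (fun q : ℝ × ℝ × ℝ =>
        (q.1 * (1 - q.2.2)) ^ α * ((q.2.1 * (1 - q.2.2)) ^ β * q.2.2 ^ γ)) =
      ∑ j ∈ range (N - γ - (α + β) + 1),
        ∑ ia ∈ range (N - (γ + j) - α + 1),
          ∑ jb ∈ range (N - (γ + j) - β + 1),
            ((((N - γ - (α + β)).choose j : ℝ) / (N.choose (γ + j) : ℝ)) *
              (((N - (γ + j) - α).choose ia : ℝ) / ((N - (γ + j)).choose (α + ia) : ℝ)) *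
              (((N - (γ + j) - β).choose jb : ℝ) / ((N - (γ + j)).choose (β + jb) : ℝ))) •
            (fun q : ℝ × ℝ × ℝ =>
              bern (N - (γ + j)) (α + ia) q.1 * bern (N - (γ + j)) (β + jb) q.2.1 *
                bern N (γ + j) q.2.2) := by
    funext q
    obtain ⟨a, b, c⟩ := q
    simp only [Finset.sum_apply, Pi.smul_apply, smul_eq_mul]
    have e1 : (a * (1 - c)) ^ α * ((b * (1 - c)) ^ β * c ^ γ)
        = (a ^ α * b ^ β) * (c ^ γ * (1 - c) ^ (α + β)) := by
      rw [mul_pow, mul_pow, pow_add]; ring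
    rw [e1, bern_expand N γ (α + β) (by omega) c, Finset.mul_sum]
    refine Finset.sum_congr rfl fun j hj => ?_
    have hj' : j ≤ N - γ - (α + β) := Nat.lt_succ_iff.mp (mem_range.mp hj)
    have hα : α ≤ N - (γ + j) := by omega
    have hβ : β ≤ N - (γ + j) := by omega
    rw [pow_eq_sum_bern (N - (γ + j)) α hα a, pow_eq_sum_bern (N - (γ + j)) β hβ b,
      Finset.sum_mul_sum, Finset.sum_mul]
    refine Finset.sum_congr rfl fun ia _ => ?_
    rw [Finset.sum_mul]
    refine Finset.sum_congr rfl fun jb _ => ?_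
    ring
  rw [key]
  refine Submodule.sum_mem _ fun j hj => Submodule.sum_mem _ fun ia hia =>
    Submodule.sum_mem _ fun jb hjb => Submodule.smul_mem _ _ ?_
  have hj' : j ≤ N - γ - (α + β) := Nat.lt_succ_iff.mp (mem_range.mp hj)
  have hia' : ia ≤ N - (γ + j) - α := Nat.lt_succ_iff.mp (mem_range.mp hia)
  have hjb' : jb ≤ N - (γ + j) - β := Nat.lt_succ_iff.mp (mem_range.mp hjb)
  apply Submodule.subset_span
  exact ⟨⟨⟨γ + j, by omega⟩, ⟨α + ia, by show α + ia < N - (γ + j) + 1; omega⟩,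
    ⟨β + jb, by show β + jb < N - (γ + j) + 1; omega⟩⟩, rfl⟩


/-- For every polynomial `p(r,s,t)` of total degree at most `N`, the pullback
`p(a(1-c), b(1-c), c)` under the collapsed-coordinate map lies in the span of the
pyramidal Bernstein-Bezier basis functions. -/
theorem pullback_mem_pyramid_span (N : ℕ) (p : MvPolynomial (Fin 3) ℝ)
    (hp : p.totalDegree ≤ N) :
    (fun q : ℝ × ℝ × ℝ =>
        MvPolynomial.eval ![q.1 * (1 - q.2.2), q.2.1 * (1 - q.2.2), q.2.2] p) ∈
      Submodule.span ℝ
        (Set.range fun idx : Σ k : Fin (N + 1), Fin (N - (k : ℕ) + 1) × Fin (N - (k : ℕ) + 1) =>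
          fun q : ℝ × ℝ × ℝ =>
            bern (N - (idx.1 : ℕ)) (idx.2.1 : ℕ) q.1 *
              bern (N - (idx.1 : ℕ)) (idx.2.2 : ℕ) q.2.1 *
              bern N (idx.1 : ℕ) q.2.2) := by
  classical
  have hrepr : (fun q : ℝ × ℝ × ℝ =>
        MvPolynomial.eval ![q.1 * (1 - q.2.2), q.2.1 * (1 - q.2.2), q.2.2] p)
      = ∑ v ∈ p.support, p.coeff v •
          (fun q : ℝ × ℝ × ℝ =>
            (q.1 * (1 - q.2.2)) ^ v 0 * ((q.2.1 * (1 - q.2.2)) ^ v 1 * q.2.2 ^ v 2)) := by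
    funext q
    rw [MvPolynomial.eval_eq']
    simp [Finset.sum_apply, Fin.prod_univ_three, mul_assoc]
  rw [hrepr]
  refine Submodule.sum_mem _ fun v hv => Submodule.smul_mem _ _ ?_
  have hdeg : v 0 + v 1 + v 2 ≤ N := by
    have h1 := MvPolynomial.le_totalDegree hv
    have h2 : (v.sum fun _ e => e) = ∑ i : Fin 3, v i := by
      rw [Finsupp.sum_fintype]; intro i; rfl
    rw [h2, Fin.sum_univ_three] at h1
    omega
  exact monomial_mem N (v 0) (v 1) (v 2) hdeg
end
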